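/- Let d ≥ 1, γ ∈ (0,1), and let k : {(x,y) ∈ ℝ^d × ℝ^d : x ≠ y} → ℂ be measurable and satisfy the regularity condition |k(x,y) − k(z,y)| ≤ C₀ |x−z|^γ / |x−y|^{d+γ} whenever |x−y| ≥ 2|x−z|. Let φ be a fixed nonnegative smooth radially decreasing function on ℝ^d supported in the ball B(0,1/2) with ∫ φ = 1, and φ_ε(x) = ε^{−d} φ(x/ε). There is a constant C depending only on d and γ such that for every measurable f : ℝ^d → [0,∞), every ε > 0 and every x ∈ ℝ^d, | ∫_{|x−y|>ε} ( ∫_{ℝ^d} φ_ε(x−z) ( k(x,y) − k(z,y) ) dz ) f(y) dy | ≤ C C₀ · sup_{r>0} r^{−d} ∫_{|x−y|<r} f(y) dy. -/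

import Mathlib

open MeasureTheory Filter Metric Complex
open scoped ENNReal Topology ComplexOrder

noncomputable section

/-- Euclidean space `ℝ^d`. -/
abbrev Rd (d : ℕ) := EuclideanSpace ℝ (Fin d)

/-- Truncated singular integral `T_ε f (x) = ∫_{|x-y|>ε} k(x,y) f(y) dy` (scalar-valued). -/
def truncC {d : ℕ} (k : Rd d → Rd d → ℂ) (ε : ℝ) (f : Rd d → ℂ) (x : Rd d) : ℂ :=
  ∫ y in {y : Rd d | ε < dist x y}, k x y * f y

/-- Truncated singular integral applied entrywise to a matrix-valued function. -/
def truncM {d n : ℕ} (k : Rd d → Rd d → ℂ) (ε : ℝ)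
    (f : Rd d → Matrix (Fin n) (Fin n) ℂ) (x : Rd d) : Matrix (Fin n) (Fin n) ℂ :=
  Matrix.of fun i j => ∫ y in {y : Rd d | ε < dist x y}, k x y * f y i j

/-- The real power `a^t` of a Hermitian matrix, via the spectral decomposition
(junk value `0` if `a` is not Hermitian). -/
def herRpow {n : ℕ} (a : Matrix (Fin n) (Fin n) ℂ) (t : ℝ) : Matrix (Fin n) (Fin n) ℂ :=
  if h : a.IsHermitian then
    (h.eigenvectorUnitary : Matrix (Fin n) (Fin n) ℂ) *
      Matrix.diagonal (fun i => ((h.eigenvalues i ^ t : ℝ) : ℂ)) *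
      (star h.eigenvectorUnitary : Matrix (Fin n) (Fin n) ℂ)
  else 0

/-- The absolute value `|a| = (a^* a)^{1/2}` of a matrix. -/
def matAbs {n : ℕ} (a : Matrix (Fin n) (Fin n) ℂ) : Matrix (Fin n) (Fin n) ℂ :=
  ((Matrix.posSemidef_conjTranspose_mul_self a).1.eigenvectorUnitary : Matrix (Fin n) (Fin n) ℂ) *
    Matrix.diagonal ((↑) ∘ (√·) ∘ (Matrix.posSemidef_conjTranspose_mul_self a).1.eigenvalues) *
    (star (Matrix.posSemidef_conjTranspose_mul_self a).1.eigenvectorUnitary : Matrix (Fin n) (Fin n) ℂ)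

/-- The operator norm of a matrix acting on the Euclidean space `ℂ^n`. -/
def matOpNorm {n : ℕ} (a : Matrix (Fin n) (Fin n) ℂ) : ℝ :=
  ‖Matrix.toEuclideanCLM (𝕜 := ℂ) a‖

/-- `‖f‖_{L_p(M_n)} = (∫ Tr |f(x)|^p dx)^{1/p}` for a matrix-valued function. -/
def matLpNorm {d n : ℕ} (p : ℝ) (f : Rd d → Matrix (Fin n) (Fin n) ℂ) : ℝ≥0∞ :=
  (∫⁻ x, ENNReal.ofReal ((Matrix.trace (herRpow (matAbs (f x)) p)).re)
      ∂(volume : Measure (Rd d))) ^ (1 / p)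

/-- The Loewner order: `a ≼ b` iff `b - a` is positive semidefinite. -/
def loewnerLE {n : ℕ} (a b : Matrix (Fin n) (Fin n) ℂ) : Prop := (b - a).PosSemidef

/-- A matrix is an orthogonal projection: Hermitian and idempotent. -/
def IsProjMat {n : ℕ} (a : Matrix (Fin n) (Fin n) ℂ) : Prop :=
  a.conjTranspose = a ∧ a * a = a

end

lemma exists_annulus {ε t : ℝ} (hε : 0 < ε) (ht : ε < t) :
    ∃ j : ℕ, (2:ℝ)^j * ε < t ∧ t ≤ 2^(j+1) * ε := by
  have hex : ∃ n : ℕ, t ≤ 2^n * ε := by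
    obtain ⟨n, hn⟩ := pow_unbounded_of_one_lt (t / ε) (one_lt_two (α := ℝ))
    exact ⟨n, by rw [div_lt_iff₀ hε] at hn; linarith [hn]⟩
  classical
  set m := Nat.find hex with hm
  have hPm : t ≤ 2^m * ε := Nat.find_spec hex
  have hm0 : m ≠ 0 := by
    intro h0
    have : t ≤ ε := by simpa [h0] using hPm
    linarith
  refine ⟨m - 1, ?_, ?_⟩
  · have := Nat.find_min hex (m := m - 1) (by omega)
    push_neg at this
    exact this
  · have : m - 1 + 1 = m := by omega
    rw [this]; exact hPm

lemma pow_arith (d j : ℕ) {γ ε : ℝ} (hε : 0 < ε) :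
    ((2:ℝ)^j * ε) ^ (-((d:ℝ)+γ)) * ((2:ℝ)^(j+2) * ε)^(d:ℕ)
    = 4^(d:ℕ) * ε^(-γ) * ((2:ℝ)^(-γ))^j := by
  have h2 : (0:ℝ) < 2 := two_pos
  rw [Real.mul_rpow (by positivity) hε.le, mul_pow,
    ← Real.rpow_natCast ((2:ℝ)^(j+2)) d, ← Real.rpow_natCast ε d,
    ← Real.rpow_natCast ((2:ℝ)^(-γ)) j,
    ← Real.rpow_natCast (2:ℝ) j, ← Real.rpow_natCast (2:ℝ) (j+2),
    ← Real.rpow_natCast (4:ℝ) d,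
    show (4:ℝ) = 2^(2:ℝ) by norm_num,
    ← Real.rpow_mul h2.le, ← Real.rpow_mul h2.le, ← Real.rpow_mul h2.le,
    ← Real.rpow_mul h2.le]
  rw [show ((2:ℝ)^((j:ℝ) * -((d:ℝ)+γ)) * ε ^ (-((d:ℝ)+γ)) * (2^((((j:ℕ)+2:ℕ):ℝ) * (d:ℝ)) * ε^((d:ℝ)))) =
      (2:ℝ)^((j:ℝ) * -((d:ℝ)+γ)) * 2^((((j:ℕ)+2:ℕ):ℝ) * (d:ℝ)) * (ε ^ (-((d:ℝ)+γ)) * ε^((d:ℝ))) by ring,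
    ← Real.rpow_add h2, ← Real.rpow_add hε, mul_right_comm, ← Real.rpow_add h2]
  rw [show -((d:ℝ)+γ) + (d:ℝ) = -γ by ring]
  congr 1
  push_cast
  ring

lemma mollifier_mass {d : ℕ} (φ : Rd d → ℝ) (hcont : Continuous φ) (hφpos : ∀ x, 0 ≤ φ x)
    (hφsupp : Function.support φ ⊆ Metric.ball 0 (1/2))
    (hφint : (∫ x, φ x ∂(volume : Measure (Rd d))) = 1)
    {ε : ℝ} (hε : 0 < ε) (x : Rd d) :
    ∫⁻ z, ENNReal.ofReal ((ε^(d:ℕ))⁻¹ * φ (ε⁻¹ • (x - z))) ∂(volume : Measure (Rd d)) = 1 := by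
  have hεd : (0:ℝ) < ε ^ (d:ℕ) := pow_pos hε d
  have hsupp : HasCompactSupport φ := by
    apply HasCompactSupport.intro (isCompact_closedBall (0 : Rd d) (1/2))
    intro y hy
    by_contra h
    exact hy (ball_subset_closedBall (hφsupp h))
  have hint : Integrable φ (volume : Measure (Rd d)) := hcont.integrable_of_hasCompactSupport hsupp
  have hbase : ∫⁻ z, ENNReal.ofReal (φ z) ∂(volume : Measure (Rd d)) = 1 := by
    rw [← ofReal_integral_eq_lintegral_ofReal hint (ae_of_all _ hφpos), hφint, ENNReal.ofReal_one]
  have htrans : ∫⁻ z, ENNReal.ofReal (φ (ε⁻¹ • (x - z))) ∂(volume : Measure (Rd d))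
      = ∫⁻ z, ENNReal.ofReal (φ (ε⁻¹ • z)) ∂(volume : Measure (Rd d)) := by
    simp_rw [sub_eq_add_neg]
    rw [(Measure.measurePreserving_neg (volume : Measure (Rd d))).lintegral_comp_emb
      (MeasurableEquiv.neg (Rd d)).measurableEmbedding
      (fun z => ENNReal.ofReal (φ (ε⁻¹ • (x + z))))]
    exact lintegral_add_left_eq_self (fun z => ENNReal.ofReal (φ (ε⁻¹ • z))) x
  have hscale : ∫⁻ z, ENNReal.ofReal (φ (ε⁻¹ • z)) ∂(volume : Measure (Rd d))
      = ENNReal.ofReal (ε ^ (d:ℕ)) := by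
    have hne : (ε⁻¹ : ℝ) ≠ 0 := inv_ne_zero hε.ne'
    have hmap : Measure.map (fun z : Rd d => ε⁻¹ • z) (volume : Measure (Rd d))
        = ENNReal.ofReal |((ε⁻¹ ^ (Module.finrank ℝ (Rd d)))⁻¹ : ℝ)| • (volume : Measure (Rd d)) :=
      Measure.map_addHaar_smul _ hne
    have := lintegral_map_equiv (μ := (volume : Measure (Rd d)))
      (fun z => ENNReal.ofReal (φ z)) (Homeomorph.smulOfNeZero (ε⁻¹) hne).toMeasurableEquiv
    rw [show ⇑(Homeomorph.smulOfNeZero (ε⁻¹) hne).toMeasurableEquiv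
        = (fun z : Rd d => ε⁻¹ • z) from rfl] at this
    rw [← this, hmap, lintegral_smul_measure, hbase, smul_eq_mul, mul_one,
      finrank_euclideanSpace_fin, inv_pow, inv_inv, abs_of_pos hεd]
  calc ∫⁻ z, ENNReal.ofReal ((ε^(d:ℕ))⁻¹ * φ (ε⁻¹ • (x - z))) ∂(volume : Measure (Rd d))
      = ∫⁻ z, ENNReal.ofReal ((ε^(d:ℕ))⁻¹) * ENNReal.ofReal (φ (ε⁻¹ • (x - z)))
          ∂(volume : Measure (Rd d)) := by
        simp_rw [ENNReal.ofReal_mul (inv_nonneg.2 hεd.le)]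
    _ = ENNReal.ofReal ((ε^(d:ℕ))⁻¹) * ∫⁻ z, ENNReal.ofReal (φ (ε⁻¹ • (x - z)))
          ∂(volume : Measure (Rd d)) := lintegral_const_mul' _ _ ENNReal.ofReal_ne_top
    _ = 1 := by
        rw [htrans, hscale, ← ENNReal.ofReal_mul (inv_nonneg.2 hεd.le),
          inv_mul_cancel₀ hεd.ne', ENNReal.ofReal_one]


theorem mollified_difference_term_le_maximal {d : ℕ} (hd : 1 ≤ d) (C₀ γ : ℝ) (hC₀ : 0 < C₀)
    (hγ : 0 < γ) (hγ1 : γ < 1) (k : Rd d → Rd d → ℂ)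
    (hkmeas : Measurable (Function.uncurry k))
    (hreg : ∀ x y z : Rd d, 2 * dist x z ≤ dist x y →
      ‖k x y - k z y‖ ≤ C₀ * dist x z ^ γ / dist x y ^ ((d : ℝ) + γ))
    (φ : Rd d → ℝ) (hφsmooth : ContDiff ℝ (⊤ : ℕ∞) φ) (hφpos : ∀ x, 0 ≤ φ x)
    (hφradial : ∀ x y : Rd d, ‖x‖ ≤ ‖y‖ → φ y ≤ φ x)
    (hφsupp : Function.support φ ⊆ Metric.ball 0 (1 / 2))
    (hφint : (∫ x, φ x ∂(volume : Measure (Rd d))) = 1) :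
    ∃ C : ℝ, 0 < C ∧
      ∀ f : Rd d → ℝ, Measurable f → (∀ y, 0 ≤ f y) →
        ∀ (ε : ℝ), 0 < ε → ∀ x : Rd d,
          ENNReal.ofReal
              ‖∫ y in {y : Rd d | ε < dist x y},
                  (∫ z, (((ε ^ (d : ℕ))⁻¹ * φ (ε⁻¹ • (x - z)) : ℝ) : ℂ) * (k x y - k z y)
                    ∂(volume : Measure (Rd d))) * (f y : ℂ)
                  ∂(volume : Measure (Rd d))‖ ≤
            ENNReal.ofReal (C * C₀) *
              ⨆ (r : ℝ) (_ : 0 < r),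
                (ENNReal.ofReal (r ^ (d : ℕ)))⁻¹ *
                  ∫⁻ y in Metric.ball x r, ENNReal.ofReal (f y)
                    ∂(volume : Measure (Rd d)) := by
  have h2γpos : (0:ℝ) < (2:ℝ)^(-γ) := Real.rpow_pos_of_pos two_pos _
  have h2γlt : (2:ℝ)^(-γ) < 1 := Real.rpow_lt_one_of_one_lt_of_neg one_lt_two (by linarith)
  set Cr : ℝ := 4^(d:ℕ) * (1 - (2:ℝ)^(-γ))⁻¹ with hCr
  have hCrpos : 0 < Cr := by
    apply mul_pos (by positivity)
    rw [inv_pos]; linarith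
  refine ⟨Cr, hCrpos, ?_⟩
  intro f hf hf0 ε hε x
  set S : Set (Rd d) := {y : Rd d | ε < dist x y} with hS
  have hSmeas : MeasurableSet S :=
    (isOpen_lt continuous_const (continuous_const.dist continuous_id)).measurableSet
  set M : ℝ≥0∞ := ⨆ (r : ℝ) (_ : 0 < r),
      (ENNReal.ofReal (r ^ (d : ℕ)))⁻¹ *
        ∫⁻ y in Metric.ball x r, ENNReal.ofReal (f y) ∂(volume : Measure (Rd d)) with hM
  set g : Rd d → ℂ := fun y => ∫ z, (((ε ^ (d : ℕ))⁻¹ * φ (ε⁻¹ • (x - z)) : ℝ) : ℂ) * (k x y - k z y)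
      ∂(volume : Measure (Rd d)) with hgdef
  -- pointwise bound on g
  have hg : ∀ y, ε < dist x y → (‖g y‖₊ : ℝ≥0∞) ≤
      ENNReal.ofReal (C₀ * ε^γ) * ENNReal.ofReal (dist x y ^ (-((d:ℝ)+γ))) := by
    intro y hy
    refine le_trans (enorm_integral_le_lintegral_enorm _) ?_
    have hpt : ∀ z, (‖(((ε ^ (d : ℕ))⁻¹ * φ (ε⁻¹ • (x - z)) : ℝ) : ℂ) * (k x y - k z y)‖₊ : ℝ≥0∞)
        ≤ ENNReal.ofReal ((ε ^ (d : ℕ))⁻¹ * φ (ε⁻¹ • (x - z))) *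
            ENNReal.ofReal (C₀ * ε^γ * dist x y ^ (-((d:ℝ)+γ))) := by
      intro z
      by_cases hz : φ (ε⁻¹ • (x - z)) = 0
      · simp [hz]
      · have hmem := hφsupp (Function.mem_support.2 hz)
        rw [mem_ball_zero_iff] at hmem
        have hnorm : ‖ε⁻¹ • (x - z)‖ = ε⁻¹ * ‖x - z‖ := by
          rw [norm_smul, Real.norm_of_nonneg (inv_nonneg.2 hε.le)]
        have hxz : ‖x - z‖ < ε / 2 := by
          rw [hnorm] at hmem
          calc ‖x-z‖ = ε * (ε⁻¹ * ‖x - z‖) := by field_simp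
          _ < ε * (1/2) := mul_lt_mul_of_pos_left hmem hε
          _ = ε/2 := by ring
        have hdist : dist x z = ‖x - z‖ := dist_eq_norm x z
        have h2 : 2 * dist x z ≤ dist x y := by rw [hdist]; linarith [hy]
        have hkk : ‖k x y - k z y‖ ≤ C₀ * ε^γ * dist x y ^ (-((d:ℝ)+γ)) := by
          refine (hreg x y z h2).trans ?_
          rw [div_eq_mul_inv, ← Real.rpow_neg dist_nonneg]
          apply mul_le_mul_of_nonneg_right _ (Real.rpow_nonneg dist_nonneg _)
          apply mul_le_mul_of_nonneg_left _ hC₀.le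
          exact Real.rpow_le_rpow dist_nonneg (by rw [hdist]; linarith) hγ.le
        have hc : (0:ℝ) ≤ (ε ^ (d : ℕ))⁻¹ * φ (ε⁻¹ • (x - z)) := mul_nonneg (by positivity) (hφpos _)
        rw [← enorm_eq_nnnorm, ← ofReal_norm, norm_mul, Complex.norm_real,
          Real.norm_of_nonneg hc, ENNReal.ofReal_mul hc]
        exact mul_le_mul_right (ENNReal.ofReal_le_ofReal hkk) _
    calc ∫⁻ z, (‖(((ε ^ (d : ℕ))⁻¹ * φ (ε⁻¹ • (x - z)) : ℝ) : ℂ) * (k x y - k z y)‖₊ : ℝ≥0∞)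
          ∂(volume : Measure (Rd d))
        ≤ ∫⁻ z, ENNReal.ofReal ((ε ^ (d : ℕ))⁻¹ * φ (ε⁻¹ • (x - z))) *
            ENNReal.ofReal (C₀ * ε^γ * dist x y ^ (-((d:ℝ)+γ))) ∂(volume : Measure (Rd d)) :=
          lintegral_mono hpt
      _ = (∫⁻ z, ENNReal.ofReal ((ε ^ (d : ℕ))⁻¹ * φ (ε⁻¹ • (x - z))) ∂(volume : Measure (Rd d))) *
            ENNReal.ofReal (C₀ * ε^γ * dist x y ^ (-((d:ℝ)+γ))) :=
          lintegral_mul_const' _ _ ENNReal.ofReal_ne_top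
      _ = ENNReal.ofReal (C₀ * ε^γ * dist x y ^ (-((d:ℝ)+γ))) := by
          rw [mollifier_mass φ hφsmooth.continuous hφpos hφsupp hφint hε x, one_mul]
      _ = ENNReal.ofReal (C₀ * ε^γ) * ENNReal.ofReal (dist x y ^ (-((d:ℝ)+γ))) :=
          ENNReal.ofReal_mul (by positivity)
  -- ball bound
  have hball : ∀ r : ℝ, 0 < r →
      (∫⁻ y in Metric.ball x r, ENNReal.ofReal (f y) ∂(volume : Measure (Rd d)))
        ≤ ENNReal.ofReal (r^(d:ℕ)) * M := by
    intro r hr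
    have h1 : (ENNReal.ofReal (r ^ (d:ℕ)))⁻¹ *
        ∫⁻ y in Metric.ball x r, ENNReal.ofReal (f y) ∂(volume : Measure (Rd d)) ≤ M :=
      le_iSup₂ (f := fun (r : ℝ) (_ : 0 < r) => (ENNReal.ofReal (r ^ (d : ℕ)))⁻¹ *
        ∫⁻ y in Metric.ball x r, ENNReal.ofReal (f y) ∂(volume : Measure (Rd d))) r hr
    have hrd : ENNReal.ofReal (r^(d:ℕ)) ≠ 0 := (ENNReal.ofReal_pos.2 (pow_pos hr d)).ne'
    calc (∫⁻ y in Metric.ball x r, ENNReal.ofReal (f y) ∂(volume : Measure (Rd d)))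
        = ENNReal.ofReal (r^(d:ℕ)) * ((ENNReal.ofReal (r^(d:ℕ)))⁻¹ *
            ∫⁻ y in Metric.ball x r, ENNReal.ofReal (f y) ∂(volume : Measure (Rd d))) := by
          rw [← mul_assoc, ENNReal.mul_inv_cancel hrd ENNReal.ofReal_ne_top, one_mul]
      _ ≤ ENNReal.ofReal (r^(d:ℕ)) * M := mul_le_mul_right h1 _
  -- annuli
  have hAnn : (∫⁻ y in S, ENNReal.ofReal (dist x y ^ (-((d:ℝ)+γ))) * ENNReal.ofReal (f y)
        ∂(volume : Measure (Rd d)))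
      ≤ ENNReal.ofReal (4^(d:ℕ) * ε^(-γ)) * (ENNReal.ofReal ((1 - (2:ℝ)^(-γ))⁻¹) * M) := by
    set A : ℕ → Set (Rd d) := fun j =>
      {y | dist x y ∈ Set.Ioc ((2:ℝ)^j * ε) ((2:ℝ)^(j+1) * ε)} with hA
    have hcover : S ⊆ ⋃ j, A j := by
      intro y hy
      obtain ⟨j, h1, h2⟩ := exists_annulus hε hy
      exact Set.mem_iUnion.2 ⟨j, ⟨h1, h2⟩⟩
    have hAj : ∀ j : ℕ, (∫⁻ y in A j,
          ENNReal.ofReal (dist x y ^ (-((d:ℝ)+γ))) * ENNReal.ofReal (f y)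
          ∂(volume : Measure (Rd d)))
        ≤ ENNReal.ofReal (((2:ℝ)^j * ε)^(-((d:ℝ)+γ))) *
            (ENNReal.ofReal (((2:ℝ)^(j+2) * ε)^(d:ℕ)) * M) := by
      intro j
      have hAm : MeasurableSet (A j) :=
        (continuous_const.dist continuous_id).measurable measurableSet_Ioc
      have hbpos : (0:ℝ) < (2:ℝ)^j * ε := by positivity
      have hsub : A j ⊆ Metric.ball x ((2:ℝ)^(j+2) * ε) := by
        intro y hy
        rcases hy with ⟨_, h2⟩
        rw [Metric.mem_ball, dist_comm]
        calc dist x y ≤ 2^(j+1) * ε := h2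
          _ < 2^(j+2) * ε := by
            apply mul_lt_mul_of_pos_right _ hε
            exact pow_lt_pow_right₀ one_lt_two (by omega)
      calc (∫⁻ y in A j, ENNReal.ofReal (dist x y ^ (-((d:ℝ)+γ))) * ENNReal.ofReal (f y)
            ∂(volume : Measure (Rd d)))
          ≤ ∫⁻ y in A j, ENNReal.ofReal (((2:ℝ)^j * ε)^(-((d:ℝ)+γ))) * ENNReal.ofReal (f y)
            ∂(volume : Measure (Rd d)) := by
            apply setLIntegral_mono' hAm
            intro y hy
            apply mul_le_mul_left
            apply ENNReal.ofReal_le_ofReal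
            exact Real.rpow_le_rpow_of_nonpos hbpos hy.1.le (neg_nonpos.mpr (by positivity))
        _ = ENNReal.ofReal (((2:ℝ)^j * ε)^(-((d:ℝ)+γ))) *
              ∫⁻ y in A j, ENNReal.ofReal (f y) ∂(volume : Measure (Rd d)) :=
            lintegral_const_mul' _ _ ENNReal.ofReal_ne_top
        _ ≤ ENNReal.ofReal (((2:ℝ)^j * ε)^(-((d:ℝ)+γ))) *
              ∫⁻ y in Metric.ball x ((2:ℝ)^(j+2) * ε), ENNReal.ofReal (f y)
                ∂(volume : Measure (Rd d)) :=
            mul_le_mul_right (lintegral_mono_set hsub) _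
        _ ≤ _ := mul_le_mul_right (hball _ (by positivity)) _
    calc (∫⁻ y in S, ENNReal.ofReal (dist x y ^ (-((d:ℝ)+γ))) * ENNReal.ofReal (f y)
          ∂(volume : Measure (Rd d)))
        ≤ ∫⁻ y in ⋃ j, A j, ENNReal.ofReal (dist x y ^ (-((d:ℝ)+γ))) * ENNReal.ofReal (f y)
          ∂(volume : Measure (Rd d)) := lintegral_mono_set hcover
      _ ≤ ∑' j : ℕ, ∫⁻ y in A j, ENNReal.ofReal (dist x y ^ (-((d:ℝ)+γ))) * ENNReal.ofReal (f y)
          ∂(volume : Measure (Rd d)) := lintegral_iUnion_le _ _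
      _ ≤ ∑' j : ℕ, ENNReal.ofReal (((2:ℝ)^j * ε)^(-((d:ℝ)+γ))) *
            (ENNReal.ofReal (((2:ℝ)^(j+2) * ε)^(d:ℕ)) * M) := ENNReal.tsum_le_tsum hAj
      _ = ∑' j : ℕ, ENNReal.ofReal (4^(d:ℕ) * ε^(-γ)) *
            ((ENNReal.ofReal ((2:ℝ)^(-γ)))^j * M) := by
          congr 1; funext j
          rw [← mul_assoc, ← mul_assoc,
            ← ENNReal.ofReal_mul (Real.rpow_nonneg (by positivity : (0:ℝ) ≤ (2:ℝ)^j * ε) _),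
            pow_arith d j hε, ENNReal.ofReal_mul (by positivity),
            ENNReal.ofReal_pow h2γpos.le]
      _ = ENNReal.ofReal (4^(d:ℕ) * ε^(-γ)) *
            ((∑' j : ℕ, (ENNReal.ofReal ((2:ℝ)^(-γ)))^j) * M) := by
          rw [ENNReal.tsum_mul_left, ENNReal.tsum_mul_right]
      _ ≤ ENNReal.ofReal (4^(d:ℕ) * ε^(-γ)) * (ENNReal.ofReal ((1 - (2:ℝ)^(-γ))⁻¹) * M) := by
          apply mul_le_mul_right
          apply mul_le_mul_left
          rw [ENNReal.tsum_geometric]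
          refine le_of_eq ?_
          rw [ENNReal.ofReal_inv_of_pos (by linarith), ENNReal.ofReal_sub 1 h2γpos.le,
            ENNReal.ofReal_one]
  -- final assembly
  show ENNReal.ofReal ‖∫ y in S, g y * (f y : ℂ) ∂(volume : Measure (Rd d))‖ ≤
    ENNReal.ofReal (Cr * C₀) * M
  calc ENNReal.ofReal ‖∫ y in S, g y * (f y:ℂ) ∂(volume : Measure (Rd d))‖
      = (‖∫ y in S, g y * (f y:ℂ) ∂(volume : Measure (Rd d))‖₊ : ℝ≥0∞) :=
        ofReal_norm _
    _ ≤ ∫⁻ y in S, (‖g y * (f y:ℂ)‖₊ : ℝ≥0∞) ∂(volume : Measure (Rd d)) :=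
        enorm_integral_le_lintegral_enorm _
    _ ≤ ∫⁻ y in S, ENNReal.ofReal (C₀*ε^γ) *
          (ENNReal.ofReal (dist x y ^ (-((d:ℝ)+γ))) * ENNReal.ofReal (f y))
          ∂(volume : Measure (Rd d)) := by
        apply setLIntegral_mono' hSmeas
        intro y hy
        have hfy : (‖(f y : ℂ)‖₊ : ℝ≥0∞) = ENNReal.ofReal (f y) := by
          rw [← enorm_eq_nnnorm, ← ofReal_norm, Complex.norm_real, Real.norm_of_nonneg (hf0 y)]
        calc (‖g y * (f y:ℂ)‖₊ : ℝ≥0∞) = (‖g y‖₊ : ℝ≥0∞) * (‖(f y:ℂ)‖₊ : ℝ≥0∞) := by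
              rw [nnnorm_mul, ENNReal.coe_mul]
          _ ≤ (ENNReal.ofReal (C₀*ε^γ) * ENNReal.ofReal (dist x y ^ (-((d:ℝ)+γ)))) *
                ENNReal.ofReal (f y) := by
              rw [hfy]; exact mul_le_mul_left (hg y hy) _
          _ = _ := mul_assoc _ _ _
    _ = ENNReal.ofReal (C₀*ε^γ) *
          ∫⁻ y in S, ENNReal.ofReal (dist x y ^ (-((d:ℝ)+γ))) * ENNReal.ofReal (f y)
            ∂(volume : Measure (Rd d)) := lintegral_const_mul' _ _ ENNReal.ofReal_ne_top
    _ ≤ ENNReal.ofReal (C₀*ε^γ) * (ENNReal.ofReal (4^(d:ℕ) * ε^(-γ)) *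
          (ENNReal.ofReal ((1 - (2:ℝ)^(-γ))⁻¹) * M)) := mul_le_mul_right hAnn _
    _ ≤ ENNReal.ofReal (Cr * C₀) * M := by
        rw [← mul_assoc, ← mul_assoc, ← ENNReal.ofReal_mul (by positivity),
          ← ENNReal.ofReal_mul (by positivity)]
        apply mul_le_mul_left
        apply ENNReal.ofReal_le_ofReal
        refine le_of_eq ?_
        have hone : ε^γ * ε^(-γ) = 1 := by
          rw [← Real.rpow_add hε]; simp
        calc C₀ * ε^γ * (4^(d:ℕ) * ε^(-γ)) * ((1-(2:ℝ)^(-γ))⁻¹)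
            = (4^(d:ℕ) * (1-(2:ℝ)^(-γ))⁻¹ * C₀) * (ε^γ * ε^(-γ)) := by ring
          _ = Cr * C₀ := by rw [hone, hCr]; ring
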